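/- arXiv:2508.14714 — 2 statements merged into one kernel-verified Lean document; each statement's English description precedes it below -/
import Mathlib

section
/- Let n ≥ 4 be an integer and let z, z' : ZMod n → ℂ be injective maps with u_e(z) = u_e(z') for every chord e ∈ E. Then z and z' differ by a fractional linear transformation: there exist a, b, c, d ∈ ℂ with a·d − b·c ≠ 0 such that for every i ∈ ZMod n, c·z(i) + d ≠ 0 and z'(i) = (a·z(i) + b)/(c·z(i) + d). -/
/-!
Fix the frame `z 0, z 1, z 2` and let `w k` be the cross-ratio of `z 0, z 1; z k, z 2`.
Then `w 2 = 1` and `w (k + 1) = u_{0k} · w k`, so the dihedral coordinates of the chords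
through `0` determine every `w k`. Equality of the cross-ratios with respect to the frames
of `z` and of `z'` is a relation bilinear in `(z i, z' i)`, and that relation is the graph of
the fractional linear transformation carrying one frame to the other.
-/

namespace M0n

/-- `{i, j}` is a chord of the `n`-gon: `j ∉ {i-1, i, i+1}`. -/
def IsChord (n : ℕ) (p : Sym2 (ZMod n)) : Prop :=
  ∀ i j : ZMod n, p = s(i, j) → j ≠ i - 1 ∧ j ≠ i ∧ j ≠ i + 1

instance (n : ℕ) [NeZero n] : DecidablePred (IsChord n) := fun p =>
  inferInstanceAs (Decidable (∀ i j : ZMod n, p = s(i, j) → j ≠ i - 1 ∧ j ≠ i ∧ j ≠ i + 1))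

/-- The finite set `E` of chords of the `n`-gon. -/
def chords (n : ℕ) [NeZero n] : Finset (Sym2 (ZMod n)) :=
  Finset.univ.filter (IsChord n)

/-- `x` lies in the cyclic open interval `{i+1, …, j-1}` from `i` to `j`. -/
def CycBtw {n : ℕ} (i x j : ZMod n) : Prop :=
  0 < (x - i).val ∧ (x - i).val < (j - i).val

instance {n : ℕ} (i x j : ZMod n) : Decidable (CycBtw i x j) :=
  inferInstanceAs (Decidable (0 < (x - i).val ∧ (x - i).val < (j - i).val))

/-- Two chords cross: exactly one endpoint of `q` lies in the cyclic open interval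
from `i` to `j`, for every ordered representation `(i, j)` of `p`. -/
def Crosses (n : ℕ) (p q : Sym2 (ZMod n)) : Prop :=
  ∀ i j k l : ZMod n, p = s(i, j) → q = s(k, l) → Xor' (CycBtw i k j) (CycBtw i l j)

instance (n : ℕ) [NeZero n] (p q : Sym2 (ZMod n)) : Decidable (Crosses n p q) :=
  inferInstanceAs (Decidable (∀ i j k l : ZMod n,
    p = s(i, j) → q = s(k, l) → Xor (CycBtw i k j) (CycBtw i l j)))

/-- The dihedral coordinate (cross-ratio)
`u_{ij}(z) = ((z i - z (j+1)) (z (i+1) - z j)) / ((z i - z j) (z (i+1) - z (j+1)))`,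
well defined on unordered pairs. -/
def u {n : ℕ} {K : Type*} [Field K] (z : ZMod n → K) : Sym2 (ZMod n) → K :=
  Sym2.lift ⟨fun i j =>
    ((z i - z (j + 1)) * (z (i + 1) - z j)) / ((z i - z j) * (z (i + 1) - z (j + 1))), by
      intro i j
      have h1 : (z i - z (j + 1)) * (z (i + 1) - z j)
          = (z j - z (i + 1)) * (z (j + 1) - z i) := by ring
      have h2 : (z i - z j) * (z (i + 1) - z (j + 1))
          = (z j - z i) * (z (j + 1) - z (i + 1)) := by ring
      dsimp only
      rw [h1, h2]⟩

/-- The cyclic interval `{a, a+1, …, a+m-1}` in `ZMod n`. -/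
def cycInt {n : ℕ} (a : ZMod n) (m : ℕ) : Finset (ZMod n) :=
  (Finset.range m).image fun t : ℕ => a + (t : ZMod n)

/-- A partition of `ZMod n` into four nonempty cyclic intervals `A, B, C, D`
appearing in this cyclic order. -/
structure CyclicFourPartition (n : ℕ) where
  a : ZMod n
  p : ℕ
  q : ℕ
  r : ℕ
  t : ℕ
  hp : 0 < p
  hq : 0 < q
  hr : 0 < r
  ht : 0 < t
  hsum : p + q + r + t = n

namespace CyclicFourPartition

variable {n : ℕ} (P : CyclicFourPartition n)

def A : Finset (ZMod n) := cycInt P.a P.p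
def B : Finset (ZMod n) := cycInt (P.a + (P.p : ZMod n)) P.q
def C : Finset (ZMod n) := cycInt (P.a + (P.p : ZMod n) + (P.q : ZMod n)) P.r
def D : Finset (ZMod n) := cycInt (P.a + (P.p : ZMod n) + (P.q : ZMod n) + (P.r : ZMod n)) P.t

end CyclicFourPartition

/-- A sign pattern is consistent if it does not contradict any extended u-relation:
for every cyclic 4-partition `(A,B,C,D)`, one of the two products of signs is `1`. -/
def Consistent (n : ℕ) (s : Sym2 (ZMod n) → ℤ) : Prop :=
  ∀ P : CyclicFourPartition n,
    (∏ x ∈ P.A, ∏ y ∈ P.C, s s(x, y)) = 1 ∨ (∏ x ∈ P.B, ∏ y ∈ P.D, s s(x, y)) = 1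

/-- A sign pattern is realizable if it is the sign vector of the dihedral coordinates
of some injective real configuration. -/
def Realizable (n : ℕ) [NeZero n] (s : Sym2 (ZMod n) → ℤ) : Prop :=
  ∃ z : ZMod n → ℝ, Function.Injective z ∧ ∀ e ∈ chords n, Real.sign (u z e) = (s e : ℝ)

/-- The length of a chord `{i,j}`: `min (d, n - d)` where `d = (j - i).val`. -/
def chordLength (n : ℕ) (p : Sym2 (ZMod n)) : ℕ :=
  Sym2.lift ⟨fun i j => min (j - i).val (i - j).val, fun _ _ => min_comm _ _⟩ p

/-- `Neg z`: the number of negative chords of a real configuration. -/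
noncomputable def negCount (n : ℕ) [NeZero n] (z : ZMod n → ℝ) : ℕ :=
  Set.ncard {e : Sym2 (ZMod n) | e ∈ chords n ∧ u z e < 0}

/-- The set of real points of `M_{0,n}` in its dihedral embedding:
nowhere-zero real solutions of all primitive u-relations in `ℝ^E`. -/
def Vset (n : ℕ) [NeZero n] : Set ({e : Sym2 (ZMod n) // e ∈ chords n} → ℝ) :=
  {w | (∀ c, w c ≠ 0) ∧ ∀ c,
    w c + ∏ e ∈ Finset.univ.filter
        (fun e : {e : Sym2 (ZMod n) // e ∈ chords n} => Crosses n e.1 c.1), w e = 1}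

/-- The part `M_{0,n}(ℝ_s)` of `V` in the open orthant given by the sign pattern `s`. -/
def VsSet (n : ℕ) [NeZero n] (s : Sym2 (ZMod n) → ℤ) :
    Set ({e : Sym2 (ZMod n) // e ∈ chords n} → ℝ) :=
  {w ∈ Vset n | ∀ c : {e : Sym2 (ZMod n) // e ∈ chords n}, Real.sign (w c) = (s c.1 : ℝ)}

section CrossRatio

variable {K : Type*} [Field K]

def crossRatio (a b c d : K) : K := ((a - c) * (b - d)) / ((a - d) * (b - c))

lemma crossRatio_self_right {a b d : K} (had : a ≠ d) (hbd : b ≠ d) : crossRatio a b d d = 1 := by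
  rw [crossRatio, mul_comm, div_self (mul_ne_zero (sub_ne_zero.2 hbd) (sub_ne_zero.2 had))]

lemma crossRatio_eq_div_mul_crossRatio {a b c d x : K} (hax : a ≠ x) (hbx : b ≠ x) :
    crossRatio a b c d = ((a - c) * (b - x)) / ((a - x) * (b - c)) * crossRatio a b x d := by
  have hax' : a - x ≠ 0 := sub_ne_zero.2 hax
  have hbx' : b - x ≠ 0 := sub_ne_zero.2 hbx
  simp only [crossRatio, div_mul_div_comm]
  rw [← mul_div_mul_right _ _ (mul_ne_zero hax' hbx')]
  ring_nf

lemma mul_eq_mul_of_crossRatio_eq {a b c d a' b' c' d' : K} (had : a ≠ d) (hbc : b ≠ c)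
    (had' : a' ≠ d') (hbc' : b' ≠ c') (h : crossRatio a b c d = crossRatio a' b' c' d') :
    (b - d) * (a' - d') * (a - c) * (b' - c') = (b' - d') * (a - d) * (a' - c') * (b - c) := by
  rw [crossRatio, crossRatio, div_eq_div_iff
    (mul_ne_zero (sub_ne_zero.2 had) (sub_ne_zero.2 hbc))
    (mul_ne_zero (sub_ne_zero.2 had') (sub_ne_zero.2 hbc'))] at h
  linear_combination h

lemma exists_mobius_of_bilinear_relation {p₀ p₁ q₀ q₁ α β : K} (hp : p₀ ≠ p₁) (hq : q₀ ≠ q₁)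
    (hα : α ≠ 0) (hβ : β ≠ 0) :
    ∃ a b c d : K, a * d - b * c ≠ 0 ∧ ∀ x y : K,
      α * (p₀ - x) * (q₁ - y) = β * (q₀ - y) * (p₁ - x) →
        c * x + d ≠ 0 ∧ y = (a * x + b) / (c * x + d) := by
  refine ⟨β * q₀ - α * q₁, α * q₁ * p₀ - β * q₀ * p₁, β - α, α * p₀ - β * p₁, ?_, ?_⟩
  · have hdet : (β * q₀ - α * q₁) * (α * p₀ - β * p₁) - (α * q₁ * p₀ - β * q₀ * p₁) * (β - α)
        = α * β * (q₀ - q₁) * (p₀ - p₁) := by ring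
    rw [hdet]
    exact mul_ne_zero (mul_ne_zero (mul_ne_zero hα hβ) (sub_ne_zero.2 hq)) (sub_ne_zero.2 hp)
  · intro x y hxy
    have hden : (β - α) * x + (α * p₀ - β * p₁) = α * (p₀ - x) - β * (p₁ - x) := by ring
    have hden_ne : α * (p₀ - x) - β * (p₁ - x) ≠ 0 := by
      intro h0
      rw [sub_eq_zero] at h0
      by_cases hx : p₀ - x = 0
      · rw [hx, mul_zero, eq_comm, mul_eq_zero] at h0
        exact hp (sub_eq_zero.1 (h0.resolve_left hβ) ▸ sub_eq_zero.1 hx)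
      · have hcancel : α * (p₀ - x) * (q₁ - y) = α * (p₀ - x) * (q₀ - y) := by
          rw [hxy, h0]; ring
        exact hq (sub_left_inj.1 (mul_left_cancel₀ (mul_ne_zero hα hx) hcancel)).symm
    rw [hden]
    refine ⟨hden_ne, ?_⟩
    rw [eq_div_iff hden_ne]
    linear_combination -hxy

end CrossRatio

lemma u_mk {n : ℕ} {K : Type*} [Field K] (z : ZMod n → K) (i j : ZMod n) :
    u z s(i, j) =
      ((z i - z (j + 1)) * (z (i + 1) - z j)) / ((z i - z j) * (z (i + 1) - z (j + 1))) :=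
  rfl

lemma isChord_mk_iff {n : ℕ} {i j : ZMod n} :
    IsChord n s(i, j) ↔ j ≠ i - 1 ∧ j ≠ i ∧ j ≠ i + 1 := by
  refine ⟨fun h => h i j rfl, fun ⟨h₁, h₂, h₃⟩ i' j' he => ?_⟩
  rcases Sym2.eq_iff.1 he with ⟨rfl, rfl⟩ | ⟨rfl, rfl⟩
  · exact ⟨h₁, h₂, h₃⟩
  · exact ⟨fun e => h₃ (by rw [e]; ring), fun e => h₂ e.symm, fun e => h₁ (by rw [e]; ring)⟩

lemma natCast_ne_natCast_of_lt {n a b : ℕ} (ha : a < n) (hb : b < n) (hab : a ≠ b) :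
    (a : ZMod n) ≠ b := fun e =>
  hab (by rwa [ZMod.natCast_eq_natCast_iff', Nat.mod_eq_of_lt ha, Nat.mod_eq_of_lt hb] at e)

lemma zero_ne_one_and_zero_ne_two_and_one_ne_two {n : ℕ} (hn : 3 ≤ n) :
    (0 : ZMod n) ≠ 1 ∧ (0 : ZMod n) ≠ 2 ∧ (1 : ZMod n) ≠ 2 := by
  refine ⟨?_, ?_, ?_⟩
  · exact_mod_cast natCast_ne_natCast_of_lt (n := n) (a := 0) (b := 1) (by omega) (by omega)
      one_ne_zero.symm
  · exact_mod_cast natCast_ne_natCast_of_lt (n := n) (a := 0) (b := 2) (by omega) (by omega)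
      two_ne_zero.symm
  · exact_mod_cast natCast_ne_natCast_of_lt (n := n) (a := 1) (b := 2) (by omega) (by omega)
      (by omega)

lemma mk_zero_natCast_mem_chords {n m : ℕ} [NeZero n] (hm : 2 ≤ m) (hmn : m + 2 ≤ n) :
    s(0, (m : ZMod n)) ∈ chords n := by
  rw [chords, Finset.mem_filter, isChord_mk_iff, zero_sub, zero_add]
  refine ⟨Finset.mem_univ _, fun e => ?_, fun e => ?_, fun e => ?_⟩
  · have hdvd : n ∣ m + 1 := by
      rw [← ZMod.natCast_eq_zero_iff, Nat.cast_succ, e, neg_add_cancel]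
    exact absurd (Nat.le_of_dvd (Nat.succ_pos m) hdvd) (by omega)
  · exact natCast_ne_natCast_of_lt (n := n) (a := m) (b := 0) (by omega) (by omega) (by omega)
      (by simpa using e)
  · exact natCast_ne_natCast_of_lt (n := n) (a := m) (b := 1) (by omega) (by omega) (by omega)
      (by simpa using e)

section Configuration

variable {n : ℕ} {K : Type*} [Field K] {z z' : ZMod n → K}

lemma crossRatio_add_one (hz : Function.Injective z) {k : ZMod n} (hk₀ : k ≠ 0) (hk₁ : k ≠ 1) :
    crossRatio (z 0) (z 1) (z (k + 1)) (z 2) =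
      u z s(0, k) * crossRatio (z 0) (z 1) (z k) (z 2) := by
  rw [u_mk, zero_add]
  exact crossRatio_eq_div_mul_crossRatio (hz.ne hk₀.symm) (hz.ne hk₁.symm)

variable [NeZero n]

lemma crossRatio_eq_of_u_eq (hn : 3 ≤ n) (hz : Function.Injective z) (hz' : Function.Injective z')
    (h : ∀ e ∈ chords n, u z e = u z' e) {m : ℕ} (hm : 2 ≤ m) (hmn : m < n) :
    crossRatio (z 0) (z 1) (z m) (z 2) = crossRatio (z' 0) (z' 1) (z' m) (z' 2) := by
  induction m, hm using Nat.le_induction with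
  | base =>
    obtain ⟨-, h02, h12⟩ := zero_ne_one_and_zero_ne_two_and_one_ne_two hn
    rw [Nat.cast_ofNat, crossRatio_self_right (hz.ne h02) (hz.ne h12),
      crossRatio_self_right (hz'.ne h02) (hz'.ne h12)]
  | succ m hm ih =>
    have hm₀ : (m : ZMod n) ≠ 0 := by
      exact_mod_cast natCast_ne_natCast_of_lt (b := 0) (by omega) (by omega) (by omega)
    have hm₁ : (m : ZMod n) ≠ 1 := by
      exact_mod_cast natCast_ne_natCast_of_lt (b := 1) (by omega) (by omega) (by omega)
    rw [Nat.cast_succ, crossRatio_add_one hz hm₀ hm₁, crossRatio_add_one hz' hm₀ hm₁,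
      h _ (mk_zero_natCast_mem_chords hm (by omega)), ih (by omega)]

lemma mul_eq_mul_of_u_eq (hn : 3 ≤ n) (hz : Function.Injective z) (hz' : Function.Injective z')
    (h : ∀ e ∈ chords n, u z e = u z' e) (i : ZMod n) :
    (z 1 - z 2) * (z' 0 - z' 2) * (z 0 - z i) * (z' 1 - z' i)
      = (z' 1 - z' 2) * (z 0 - z 2) * (z' 0 - z' i) * (z 1 - z i) := by
  obtain ⟨h01, h02, -⟩ := zero_ne_one_and_zero_ne_two_and_one_ne_two hn
  by_cases hi₀ : i = 0
  · subst hi₀; ring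
  by_cases hi₁ : i = 1
  · subst hi₁; ring
  have hval : 2 ≤ i.val := by
    by_contra hlt
    obtain hv | hv : i.val = 0 ∨ i.val = 1 := by omega
    · exact hi₀ ((ZMod.val_eq_zero i).1 hv)
    · exact hi₁ (by rw [← ZMod.natCast_zmod_val i, hv, Nat.cast_one])
  rw [← ZMod.natCast_zmod_val i] at hi₁ ⊢
  exact mul_eq_mul_of_crossRatio_eq (hz.ne h02) (hz.ne hi₁).symm (hz'.ne h02) (hz'.ne hi₁).symm
    (crossRatio_eq_of_u_eq hn hz hz' h hval (ZMod.val_lt i))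

end Configuration

/-- For `n ≥ 4`, two injective configurations `z, z' : ZMod n → ℂ` with
the same dihedral coordinates differ by a fractional linear transformation. -/
theorem same_u_iff_mobius (n : ℕ) [NeZero n] (hn : 4 ≤ n) (z z' : ZMod n → ℂ)
    (hz : Function.Injective z) (hz' : Function.Injective z')
    (h : ∀ e ∈ chords n, u z e = u z' e) :
    ∃ a b c d : ℂ, a * d - b * c ≠ 0 ∧
      ∀ i : ZMod n, c * z i + d ≠ 0 ∧ z' i = (a * z i + b) / (c * z i + d) := by
  obtain ⟨h01, h02, h12⟩ := zero_ne_one_and_zero_ne_two_and_one_ne_two (n := n) (by omega)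
  obtain ⟨a, b, c, d, hdet, hmob⟩ := exists_mobius_of_bilinear_relation (hz.ne h01) (hz'.ne h01)
    (mul_ne_zero (sub_ne_zero.2 (hz.ne h12)) (sub_ne_zero.2 (hz'.ne h02)))
    (mul_ne_zero (sub_ne_zero.2 (hz'.ne h12)) (sub_ne_zero.2 (hz.ne h02)))
  exact ⟨a, b, c, d, hdet, fun i => hmob _ _ (mul_eq_mul_of_u_eq (by omega) hz hz' h i)⟩

end M0n
end

section
/- Let n and ℓ be integers with 3 ≤ ℓ ≤ n−2, and let s : E → {−1,1} be a consistent sign pattern with s({0,ℓ}) = −1 and s(e) = 1 for every chord e of length strictly less than ℓ. Extend s to all unordered pairs by setting s̄(p) = s(p) if p is a chord and s̄(p) = 1 otherwise. Then for every integer i with ℓ+1 ≤ i ≤ n−1, writing M_i = ∏_{k=2}^{ℓ−2} s̄({i,k}), none of the following three sign tuples occurs: (M_i, s̄({i,0}), s̄({1,i}), s̄({ℓ−1,i}), s̄({ℓ,i})) = (−1, 1, 1, 1, 1), or = (1, 1, −1, 1, 1), or = (1, 1, 1, −1, 1). -/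
namespace M0n

/-!
Let `T = ∏_{k=1}^{ℓ-1} s̄{i,k}`: each of the three rows has `T = -1` and `s̄{i,0} = s̄{i,ℓ} = 1`.
For the cyclic 4-partitions with `A = {i}`, `B = [i+1, n-1] ∪ {0}` and `C = [1, ℓ-1]` or
`C = [1, ℓ]`, the product over `A × C` is `T ≠ 1`, so consistency makes both products over
`B × D` equal to `1`; their quotient gives `∏_{x ∈ B} s̄{x,ℓ} = 1`. The same argument with
`B = [i+1, n-1]` and `C = [0, ℓ-1]` or `[0, ℓ]` gives the product over `[i+1, n-1]`, hence
`s̄{0,ℓ} = 1`, contradicting `s{0,ℓ} = -1`. (When `i = ℓ + 1` or `i = n - 1` one of the four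
partitions degenerates, but then the product it was needed for is empty.)
-/

open Finset

section

variable {n : ℕ}

theorem mem_chords [NeZero n] {e : Sym2 (ZMod n)} : e ∈ chords n ↔ IsChord n e := by
  simp [chords]

theorem isChord_of_sub_eq_natCast {x y : ZMod n} {m : ℕ} (hxy : y - x = m) (hm : 2 ≤ m)
    (hmn : m + 2 ≤ n) : IsChord n s(x, y) := by
  have hne : ∀ k : ℕ, 0 < k → k < n → (k : ZMod n) ≠ 0 := fun k hk hkn hk0 =>
    absurd (Nat.le_of_dvd hk ((ZMod.natCast_eq_zero_iff k n).1 hk0)) (by omega)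
  have hm1 : ((m - 1 : ℕ) : ZMod n) = m - 1 := by push_cast [Nat.cast_sub (by omega : 1 ≤ m)]; rfl
  intro i j hij
  rcases Sym2.eq_iff.1 hij with ⟨rfl, rfl⟩ | ⟨rfl, rfl⟩
  · refine ⟨fun h => hne (m + 1) (by omega) (by omega) ?_,
      fun h => hne m (by omega) (by omega) ?_, fun h => hne (m - 1) (by omega) (by omega) ?_⟩
    · push_cast; linear_combination h - hxy
    · linear_combination h - hxy
    · rw [hm1]; linear_combination h - hxy
  · refine ⟨fun h => hne (m - 1) (by omega) (by omega) ?_,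
      fun h => hne m (by omega) (by omega) ?_, fun h => hne (m + 1) (by omega) (by omega) ?_⟩
    · rw [hm1]; linear_combination -hxy - h
    · linear_combination -hxy - h
    · push_cast; linear_combination -hxy - h

theorem isChord_of_mem_cycInt {a x y : ZMod n} {p q r : ℕ} (hx : x ∈ cycInt a p)
    (hy : y ∈ cycInt (a + (p : ZMod n) + (q : ZMod n)) r) (hq : 0 < q) (hn : p + q + r < n) :
    IsChord n s(x, y) := by
  obtain ⟨k, hk, rfl⟩ := mem_image.1 hx
  obtain ⟨l, hl, rfl⟩ := mem_image.1 hy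
  rw [mem_range] at hk hl
  refine isChord_of_sub_eq_natCast (m := p + q + l - k) ?_ (by omega) (by omega)
  push_cast [Nat.cast_sub (by omega : k ≤ p + q + l)]
  ring

theorem prod_cycInt {M : Type*} [CommMonoid M] (a : ZMod n) {m : ℕ} (hm : m ≤ n)
    (f : ZMod n → M) : ∏ x ∈ cycInt a m, f x = ∏ k ∈ range m, f (a + k) := by
  refine prod_image fun k hk l hl hkl => ?_
  rw [coe_range, Set.mem_Iio] at hk hl
  have := (ZMod.natCast_eq_natCast_iff' k l n).1 (add_left_cancel hkl)
  rwa [Nat.mod_eq_of_lt (by omega), Nat.mod_eq_of_lt (by omega)] at this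

section blockProd

variable {M : Type*} [CommMonoid M] (σ : Sym2 (ZMod n) → M)

def blockProd (a : ZMod n) (p : ℕ) (b : ZMod n) (r : ℕ) : M :=
  ∏ x ∈ range p, ∏ y ∈ range r, σ s(a + x, b + y)

theorem prod_cycInt_prod_cycInt (a b : ZMod n) {p r : ℕ} (hp : p ≤ n) (hr : r ≤ n) :
    ∏ x ∈ cycInt a p, ∏ y ∈ cycInt b r, σ s(x, y) = blockProd σ a p b r := by
  simp only [prod_cycInt _ hp, prod_cycInt _ hr, blockProd]

theorem blockProd_succ_right' (a b : ZMod n) (p r : ℕ) :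
    blockProd σ a p b (r + 1) = (∏ x ∈ range p, σ s(a + x, b)) * blockProd σ a p (b + 1) r := by
  simp only [blockProd, prod_range_succ', Nat.cast_zero, add_zero, ← prod_mul_distrib]
  refine prod_congr rfl fun x _ => ?_
  rw [mul_comm]
  congr 1
  refine prod_congr rfl fun y _ => ?_
  rw [Nat.cast_succ, add_comm (y : ZMod n), add_assoc]

theorem blockProd_one_natCast (a : ZMod n) (m r : ℕ) :
    blockProd σ a 1 (m : ZMod n) r = ∏ k ∈ Ico m (m + r), σ s(a, (k : ZMod n)) := by
  simp [blockProd, prod_Ico_eq_prod_range]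

end blockProd

theorem Consistent.extend [NeZero n] {s : Sym2 (ZMod n) → ℤ} (hs : Consistent n s) :
    Consistent n fun e => if e ∈ chords n then s e else 1 := by
  have hchords : ∀ {a : ZMod n} {p q r : ℕ}, 0 < q → p + q + r < n →
      ∏ x ∈ cycInt a p, ∏ y ∈ cycInt (a + (p : ZMod n) + (q : ZMod n)) r,
        (if s(x, y) ∈ chords n then s s(x, y) else 1) =
      ∏ x ∈ cycInt a p, ∏ y ∈ cycInt (a + (p : ZMod n) + (q : ZMod n)) r, s s(x, y) :=
    fun hq hn => prod_congr rfl fun _ hx => prod_congr rfl fun _ hy =>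
      if_pos (mem_chords.2 (isChord_of_mem_cycInt hx hy hq hn))
  intro P
  have hsum := P.hsum
  have hP := hs P
  simp only [CyclicFourPartition.A, CyclicFourPartition.B, CyclicFourPartition.C,
    CyclicFourPartition.D] at hP ⊢
  rwa [hchords P.hq (by have := P.ht; omega), hchords P.hr (by have := P.hp; omega)]

theorem Consistent.blockProd_eq_one_or {σ : Sym2 (ZMod n) → ℤ} (h : Consistent n σ) (a : ZMod n)
    {p q r t : ℕ} (hp : 0 < p) (hq : 0 < q) (hr : 0 < r) (ht : 0 < t) (hsum : p + q + r + t = n) :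
    blockProd σ a p (a + p + q) r = 1 ∨ blockProd σ (a + p) q (a + p + q + r) t = 1 := by
  have := h ⟨a, p, q, r, t, hp, hq, hr, ht, hsum⟩
  simp only [CyclicFourPartition.A, CyclicFourPartition.B, CyclicFourPartition.C,
    CyclicFourPartition.D] at this
  rwa [prod_cycInt_prod_cycInt _ _ _ (by omega) (by omega),
    prod_cycInt_prod_cycInt _ _ _ (by omega) (by omega)] at this

theorem Consistent.prod_eq_one_of_blockProd_ne_one {σ : Sym2 (ZMod n) → ℤ} (h : Consistent n σ)
    {a c : ZMod n} {p q r t : ℕ} (hp : 0 < p) (hr : 0 < r) (hsum : p + q + r + 1 + t = n)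
    (hc : c = a + p + q) (hC : blockProd σ a p c r ≠ 1) (hC' : blockProd σ a p c (r + 1) ≠ 1) :
    ∏ x ∈ range q, σ s(a + p + x, c + r) = 1 := by
  subst hc
  rcases q.eq_zero_or_pos with rfl | hq
  · simp
  have hD := (h.blockProd_eq_one_or a hp hq hr t.succ_pos (by omega)).resolve_left hC
  rw [blockProd_succ_right'] at hD
  rcases t.eq_zero_or_pos with rfl | ht
  · simpa [blockProd] using hD
  have hD' := (h.blockProd_eq_one_or a hp hq r.succ_pos ht (by omega)).resolve_left hC'
  rw [Nat.cast_succ, ← add_assoc] at hD'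
  rwa [hD', mul_one] at hD

theorem Consistent.apply_zero_eq_one_of_prod_Ico_ne_one {σ : Sym2 (ZMod n) → ℤ}
    (h : Consistent n σ) {ℓ i : ℕ} (hℓ : 2 ≤ ℓ) (hℓi : ℓ < i) (hin : i < n)
    (hi0 : σ s((i : ZMod n), 0) = 1) (hiℓ : σ s((i : ZMod n), ℓ) = 1)
    (hrow : ∏ k ∈ Ico 1 ℓ, σ s((i : ZMod n), k) ≠ 1) :
    σ s(0, (ℓ : ZMod n)) = 1 := by
  have hrow₀ : ∏ k ∈ Ico 0 ℓ, σ s((i : ZMod n), k) ≠ 1 := by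
    rwa [prod_eq_prod_Ico_succ_bot (by omega), Nat.cast_zero, hi0, one_mul]
  have hrow_succ : ∀ m ≤ 1, ∏ k ∈ Ico m ℓ, σ s((i : ZMod n), k) ≠ 1 →
      ∏ k ∈ Ico m (ℓ + 1), σ s((i : ZMod n), k) ≠ 1 := fun m hm hm' => by
    rwa [prod_Ico_succ_top (by omega), hiℓ, mul_one]
  have hwrap : ∀ {m k : ℕ}, k = m + n → (k : ZMod n) = m := fun hk => by
    rw [hk, Nat.cast_add, ZMod.natCast_self, add_zero]
  have hlast := h.prod_eq_one_of_blockProd_ne_one (a := i) (p := 1) (q := n - i) (r := ℓ - 1)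
    (t := i - ℓ - 1) (c := ((1 : ℕ) : ZMod n)) one_pos (by omega) (by omega)
    (by rw [← Nat.cast_add, ← Nat.cast_add]; exact (hwrap (m := 1) (by omega)).symm)
    (by rwa [blockProd_one_natCast, show 1 + (ℓ - 1) = ℓ by omega])
    (by rw [blockProd_one_natCast, show 1 + (ℓ - 1 + 1) = ℓ + 1 by omega]
        exact hrow_succ 1 le_rfl hrow)
  have hinit := h.prod_eq_one_of_blockProd_ne_one (a := i) (p := 1) (q := n - i - 1) (r := ℓ)
    (t := i - ℓ - 1) (c := ((0 : ℕ) : ZMod n)) one_pos (by omega) (by omega)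
    (by rw [← Nat.cast_add, ← Nat.cast_add]; exact (hwrap (m := 0) (by omega)).symm)
    (by rwa [blockProd_one_natCast, zero_add])
    (by rw [blockProd_one_natCast, zero_add]; exact hrow_succ 0 zero_le_one hrow₀)
  rw [Nat.cast_zero, zero_add] at hinit
  rw [← Nat.cast_add 1 (ℓ - 1), show 1 + (ℓ - 1) = ℓ by omega,
    show n - i = n - i - 1 + 1 by omega, prod_range_succ, hinit, one_mul, ← Nat.cast_add,
    ← Nat.cast_add, hwrap (m := 0) (by omega), Nat.cast_zero] at hlast
  exact hlast

end

theorem consistent_avoids_first_three_rows_general (n ℓ : ℕ) [NeZero n]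
    (hl3 : 3 ≤ ℓ) (hln : ℓ ≤ n - 2) (s : Sym2 (ZMod n) → ℤ)
    (hcons : Consistent n s)
    (hneg : s s((0 : ZMod n), (ℓ : ZMod n)) = -1) :
    ∀ i : ℕ, ℓ + 1 ≤ i → i ≤ n - 1 →
      ∀ sb : Sym2 (ZMod n) → ℤ, sb = (fun p => if p ∈ chords n then s p else 1) →
      ∀ M : ℤ, M = ∏ k ∈ Finset.Icc 2 (ℓ - 2), sb s((i : ZMod n), (k : ZMod n)) →
      ¬ ((M = -1 ∧ sb s((i : ZMod n), (0 : ZMod n)) = 1 ∧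
            sb s((1 : ZMod n), (i : ZMod n)) = 1 ∧
            sb s((ℓ : ZMod n) - 1, (i : ZMod n)) = 1 ∧
            sb s((ℓ : ZMod n), (i : ZMod n)) = 1) ∨
         (M = 1 ∧ sb s((i : ZMod n), (0 : ZMod n)) = 1 ∧
            sb s((1 : ZMod n), (i : ZMod n)) = -1 ∧
            sb s((ℓ : ZMod n) - 1, (i : ZMod n)) = 1 ∧
            sb s((ℓ : ZMod n), (i : ZMod n)) = 1) ∨
         (M = 1 ∧ sb s((i : ZMod n), (0 : ZMod n)) = 1 ∧
            sb s((1 : ZMod n), (i : ZMod n)) = 1 ∧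
            sb s((ℓ : ZMod n) - 1, (i : ZMod n)) = -1 ∧
            sb s((ℓ : ZMod n), (i : ZMod n)) = 1)) := by
  intro i hi1 hi2 sb hsb M hM hrows
  have hcons' : Consistent n sb := hsb ▸ hcons.extend
  have hneg' : sb s(0, (ℓ : ZMod n)) = -1 := by
    have hchord := isChord_of_sub_eq_natCast (n := n) (m := ℓ) (sub_zero _) (by omega) (by omega)
    simpa only [hsb, if_pos (mem_chords.2 hchord)] using hneg
  have hrow : ∏ k ∈ Ico 1 ℓ, sb s((i : ZMod n), k) =
      sb s(1, (i : ZMod n)) * (sb s((ℓ : ZMod n) - 1, i) * M) := by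
    rw [show Ico 1 ℓ = insert 1 (insert (ℓ - 1) (Icc 2 (ℓ - 2))) by
        ext; simp only [mem_Ico, mem_insert, mem_Icc]; omega,
      prod_insert (by simp only [mem_insert, mem_Icc]; omega),
      prod_insert (by simp only [mem_Icc]; omega), ← hM,
      Nat.cast_sub (by omega), Nat.cast_one, Sym2.eq_swap, Sym2.eq_swap (a := (i : ZMod n))]
  have h0 : sb s((i : ZMod n), 0) = 1 := by rcases hrows with h | h | h <;> exact h.2.1
  have hℓ : sb s((i : ZMod n), ℓ) = 1 := by
    rw [Sym2.eq_swap]; rcases hrows with h | h | h <;> exact h.2.2.2.2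
  have hrow_ne : ∏ k ∈ Ico 1 ℓ, sb s((i : ZMod n), k) ≠ 1 := by
    rw [hrow]
    rcases hrows with ⟨hM, -, h1, hℓ1, -⟩ | ⟨hM, -, h1, hℓ1, -⟩ | ⟨hM, -, h1, hℓ1, -⟩ <;>
      simp [hM, h1, hℓ1]
  have hpos := hcons'.apply_zero_eq_one_of_prod_Ico_ne_one (by omega) hi1 (by omega) h0 hℓ hrow_ne
  rw [hneg'] at hpos
  exact absurd hpos (by decide)

/-- Let `3 ≤ ℓ ≤ n - 2` and let `s` be a consistent sign pattern whose
shortest negative chord is `{0, ℓ}`. Then for `ℓ+1 ≤ i ≤ n-1`, none of the three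
problematic sign tuples (the first three rows of Table 4) occurs. -/
theorem consistent_avoids_first_three_rows (n ℓ : ℕ) [NeZero n]
    (hl3 : 3 ≤ ℓ) (hln : ℓ ≤ n - 2) (s : Sym2 (ZMod n) → ℤ)
    (hs : ∀ e ∈ chords n, s e = 1 ∨ s e = -1)
    (hcons : Consistent n s)
    (hneg : s s((0 : ZMod n), (ℓ : ZMod n)) = -1)
    (hshort : ∀ e ∈ chords n, chordLength n e < ℓ → s e = 1) :
    ∀ i : ℕ, ℓ + 1 ≤ i → i ≤ n - 1 →
      ∀ sb : Sym2 (ZMod n) → ℤ, sb = (fun p => if p ∈ chords n then s p else 1) →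
      ∀ M : ℤ, M = ∏ k ∈ Finset.Icc 2 (ℓ - 2), sb s((i : ZMod n), (k : ZMod n)) →
      ¬ ((M = -1 ∧ sb s((i : ZMod n), (0 : ZMod n)) = 1 ∧
            sb s((1 : ZMod n), (i : ZMod n)) = 1 ∧
            sb s((ℓ : ZMod n) - 1, (i : ZMod n)) = 1 ∧
            sb s((ℓ : ZMod n), (i : ZMod n)) = 1) ∨
         (M = 1 ∧ sb s((i : ZMod n), (0 : ZMod n)) = 1 ∧
            sb s((1 : ZMod n), (i : ZMod n)) = -1 ∧
            sb s((ℓ : ZMod n) - 1, (i : ZMod n)) = 1 ∧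
            sb s((ℓ : ZMod n), (i : ZMod n)) = 1) ∨
         (M = 1 ∧ sb s((i : ZMod n), (0 : ZMod n)) = 1 ∧
            sb s((1 : ZMod n), (i : ZMod n)) = 1 ∧
            sb s((ℓ : ZMod n) - 1, (i : ZMod n)) = -1 ∧
            sb s((ℓ : ZMod n), (i : ZMod n)) = 1)) :=
  consistent_avoids_first_three_rows_general n ℓ hl3 hln s hcons hneg

end M0n
end
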